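/- arXiv:2505.00218 — 3 statements merged into one kernel-verified Lean document; each statement's English description precedes it below -/
import Mathlib

section
/- If a sequence δ_1, ..., δ_{L} of real numbers in (0,1) satisfies δ_l · ∏_{i=1}^{l-1} √(1 − δ_i²) = β for all l = 1,...,L, then δ_l = β / √(1 − (l−1)β²) for each l. -/
/-!
Write `P l = ∏_{i<l} √(1 - δ i ^ 2)` for the power left in the waveguide before antenna `l`.
Since `δ l * P l = β`, squaring the recursion `P (l + 1) = P l * √(1 - δ l ^ 2)` gives
`P (l + 1) ^ 2 = P l ^ 2 - (δ l * P l) ^ 2 = P l ^ 2 - β ^ 2`: every antenna removes the same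
power `β ^ 2`. Hence `P l = √(1 - (l - 1) β ^ 2)` and `δ l = β / P l`.
-/

open Finset

lemma sq_mul_sqrt_one_sub_sq {p d : ℝ} (hd : d ^ 2 ≤ 1) :
    (p * √(1 - d ^ 2)) ^ 2 = p ^ 2 - (d * p) ^ 2 := by
  rw [mul_pow, Real.sq_sqrt (by linarith)]
  ring

lemma sq_prod_Ico_sqrt_one_sub_sq {δ : ℕ → ℝ} {β : ℝ} {n : ℕ} (hn : 1 ≤ n)
    (hδ : ∀ l ∈ Ico 1 n, δ l ^ 2 ≤ 1)
    (hrec : ∀ l ∈ Ico 1 n, δ l * ∏ i ∈ Ico 1 l, √(1 - δ i ^ 2) = β) :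
    (∏ i ∈ Ico 1 n, √(1 - δ i ^ 2)) ^ 2 = 1 - ((n : ℝ) - 1) * β ^ 2 := by
  induction n, hn using Nat.le_induction with
  | base => simp
  | succ n hn ih =>
    have hn_mem : n ∈ Ico 1 (n + 1) := mem_Ico.mpr ⟨hn, n.lt_succ_self⟩
    have hsub : Ico 1 n ⊆ Ico 1 (n + 1) := Ico_subset_Ico_right n.le_succ
    rw [prod_Ico_succ_top hn, sq_mul_sqrt_one_sub_sq (hδ n hn_mem), hrec n hn_mem,
      ih (fun l hl => hδ l (hsub hl)) (fun l hl => hrec l (hsub hl))]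
    push_cast
    ring

theorem stmt_0_general (L : ℕ) (β : ℝ)
    (δ : ℕ → ℝ)
    (hδ : ∀ l ∈ Finset.Icc 1 L, 0 < δ l ∧ δ l < 1)
    (hrec : ∀ l ∈ Finset.Icc 1 L,
      δ l * ∏ i ∈ Finset.Icc 1 (l - 1), Real.sqrt (1 - δ i ^ 2) = β) :
    ∀ l ∈ Finset.Icc 1 L,
      δ l = β / Real.sqrt (1 - ((l : ℝ) - 1) * β ^ 2) := by
  have hIcc : ∀ l, Icc 1 (l - 1) = Ico 1 l := fun l => by
    ext i
    simp only [mem_Icc, mem_Ico]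
    omega
  simp only [hIcc] at hrec
  have hδ_sq : ∀ l ∈ Icc 1 L, δ l ^ 2 < 1 := fun l hl => by
    obtain ⟨h0, h1⟩ := hδ l hl
    nlinarith
  intro l hl
  have hsub : Ico 1 l ⊆ Icc 1 L := fun i hi => by
    simp only [mem_Icc, mem_Ico] at hi hl ⊢
    omega
  have hP_sq := sq_prod_Ico_sqrt_one_sub_sq (mem_Icc.mp hl).1
    (fun i hi => (hδ_sq i (hsub hi)).le) (fun i hi => hrec i (hsub hi))
  have hP_pos : 0 < ∏ i ∈ Ico 1 l, √(1 - δ i ^ 2) :=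
    prod_pos fun i hi => Real.sqrt_pos.mpr (sub_pos.mpr (hδ_sq i (hsub hi)))
  rw [← hP_sq, Real.sqrt_sq hP_pos.le, ← hrec l hl, mul_div_cancel_right₀ _ hP_pos.ne']

/-- Power radiation recursion: if `δ l · ∏_{i=1}^{l-1} √(1 − δ i²) = β` for all
`l = 1,…,L`, with `δ l ∈ (0,1)`, `β ∈ (0,1)` and `(L−1)β² < 1`, then
`δ l = β / √(1 − (l−1)β²)`. -/
theorem stmt_0 (L : ℕ) (hL : 1 ≤ L) (β : ℝ) (hβ : 0 < β ∧ β < 1)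
    (hβL : ((L : ℝ) - 1) * β ^ 2 < 1)
    (δ : ℕ → ℝ)
    (hδ : ∀ l ∈ Finset.Icc 1 L, 0 < δ l ∧ δ l < 1)
    (hrec : ∀ l ∈ Finset.Icc 1 L,
      δ l * ∏ i ∈ Finset.Icc 1 (l - 1), Real.sqrt (1 - δ i ^ 2) = β) :
    ∀ l ∈ Finset.Icc 1 L,
      δ l = β / Real.sqrt (1 - ((l : ℝ) - 1) * β ^ 2) :=
  stmt_0_general L β δ hδ hrec
end

section
/- The power radiation ratio β_l = δ_l · ∏_{i=1}^{l-1} √(1 − δ_i²) with δ_l = 1/√(L − l + 1) equals 1/√L for every l = 1,...,L, so the sum of squared radiation ratios over all L antennas equals 1 (full power radiation). -/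
open Finset Real

/-- The paper's `δ_i`. -/
noncomputable def couplingRatio (L i : ℕ) : ℝ := 1 / √((L : ℝ) - i + 1)

lemma couplingRatio_sq {L i : ℕ} (hi : i ≤ L) : couplingRatio L i ^ 2 = 1 / ((L : ℝ) - i + 1) := by
  have hi' : (i : ℝ) ≤ L := by exact_mod_cast hi
  rw [couplingRatio, div_pow, one_pow, sq_sqrt (by linarith)]

/-- The factors `√(1 - δ_i²) = √(L - i) / √(L - i + 1)` telescope. -/
lemma prod_sqrt_one_sub_couplingRatio_sq {L n : ℕ} (hn : n < L) :
    ∏ i ∈ Icc 1 n, √(1 - couplingRatio L i ^ 2) = √((L : ℝ) - n) / √L := by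
  induction n with
  | zero =>
    have hL : (0 : ℝ) < L := by exact_mod_cast hn
    simp [hL.ne']
  | succ n ih =>
    have hn' : (n : ℝ) + 1 < L := by exact_mod_cast hn
    have hpos : (0 : ℝ) < L - n := by linarith
    rw [prod_Icc_succ_top (Nat.le_add_left 1 n), ih (by omega), couplingRatio_sq hn.le]
    have hfactor : 1 - 1 / ((L : ℝ) - ↑(n + 1) + 1) = (L - (n + 1)) / (L - n) := by
      have hden : (L : ℝ) - ↑(n + 1) + 1 = L - n := by push_cast; ring
      rw [hden]
      field_simp
      ring
    rw [hfactor, sqrt_div' _ hpos.le, Nat.cast_succ]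
    field_simp [(sqrt_pos.mpr hpos).ne']

lemma couplingRatio_mul_prod_sqrt_one_sub_couplingRatio_sq {L l : ℕ} (hl : l ∈ Icc 1 L) :
    couplingRatio L l * ∏ i ∈ Icc 1 (l - 1), √(1 - couplingRatio L i ^ 2) = 1 / √L := by
  obtain ⟨hl₁, hlL⟩ := mem_Icc.mp hl
  have hpos : (0 : ℝ) < L - l + 1 := by
    have : (l : ℝ) ≤ L := by exact_mod_cast hlL
    linarith
  have hsub : (L : ℝ) - (l - 1 : ℕ) = L - l + 1 := by
    rw [Nat.cast_sub hl₁, Nat.cast_one]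
    ring
  rw [prod_sqrt_one_sub_couplingRatio_sq (by omega), hsub, couplingRatio]
  field_simp [(sqrt_pos.mpr hpos).ne']

/-- With `δ l = 1/√(L − l + 1)`, the power radiation ratio
`β l = δ l · ∏_{i=1}^{l-1} √(1 − δ i²)` equals `1/√L` for every `l = 1,…,L`,
and the sum of squared radiation ratios equals `1` (full power radiation). -/
theorem stmt_3 (L : ℕ) (hL : 1 ≤ L)
    (δ : ℕ → ℝ)
    (hδ : ∀ l ∈ Finset.Icc 1 L,
      δ l = 1 / Real.sqrt ((L : ℝ) - (l : ℝ) + 1))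
    (β : ℕ → ℝ)
    (hβ : ∀ l ∈ Finset.Icc 1 L,
      β l = δ l * ∏ i ∈ Finset.Icc 1 (l - 1), Real.sqrt (1 - δ i ^ 2)) :
    (∀ l ∈ Finset.Icc 1 L, β l = 1 / Real.sqrt L) ∧
      ∑ l ∈ Finset.Icc 1 L, β l ^ 2 = 1 := by
  have hβ_eq : ∀ l ∈ Icc 1 L, β l = 1 / √L := by
    intro l hl
    have hδ_eq : ∀ i ∈ Icc 1 (l - 1), δ i = couplingRatio L i := fun i hi =>
      hδ i (Icc_subset_Icc_right (by have := mem_Icc.mp hl; omega) hi)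
    rw [hβ l hl, hδ l hl, prod_congr rfl fun i hi => by rw [hδ_eq i hi]]
    exact couplingRatio_mul_prod_sqrt_one_sub_couplingRatio_sq hl
  refine ⟨hβ_eq, ?_⟩
  have hL' : (0 : ℝ) < L := by exact_mod_cast hL
  rw [sum_congr rfl fun l hl => by rw [hβ_eq l hl], sum_const, Nat.card_Icc, Nat.add_sub_cancel,
    div_pow, one_pow, sq_sqrt hL'.le, nsmul_eq_mul]
  field_simp
end

section
/- The McCormick relaxation gap at any feasible point is bounded by the box size: if x ∈ [x̲, x̄], y ∈ [y̲, ȳ], and z satisfies all four McCormick inequalities, then |z − x·y| ≤ (x̄ − x̲)·(ȳ − y̲)/4. -/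
/-!
Write `a = x - x̲`, `c = x̄ - x`, `b = y - y̲`, `d = ȳ - y`. The four McCormick inequalities say
`x·y - z ≤ min (a·b) (c·d)` and `z - x·y ≤ min (a·d) (c·b)`. In both cases the two products
multiply to `(a·c)·(b·d)`, and by AM-GM `a·c ≤ ((x̄ - x̲)/2)²`, `b·d ≤ ((ȳ - y̲)/2)²`, so the
smaller product is at most `(x̄ - x̲)·(ȳ - y̲)/4`.
-/

section

variable {K : Type*} [Field K] [LinearOrder K] [IsStrictOrderedRing K]

theorem min_mul_mul_le_add_mul_add_div_four {a b c d : K}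
    (ha : 0 ≤ a) (hb : 0 ≤ b) (hc : 0 ≤ c) (hd : 0 ≤ d) :
    min (a * b) (c * d) ≤ (a + c) * (b + d) / 4 := by
  have hmin : 0 ≤ min (a * b) (c * d) := le_min (mul_nonneg ha hb) (mul_nonneg hc hd)
  have hsq : min (a * b) (c * d) ^ 2 ≤ ((a + c) * (b + d) / 4) ^ 2 :=
    calc min (a * b) (c * d) ^ 2 ≤ (a * b) * (c * d) := by
          rw [sq]; exact mul_le_mul (min_le_left _ _) (min_le_right _ _) hmin (mul_nonneg ha hb)
      _ = (4 * a * c) * (4 * b * d) / 16 := by ring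
      _ ≤ (a + c) ^ 2 * (b + d) ^ 2 / 16 := by
          gcongr
          · exact four_mul_le_sq_add a c
          · exact four_mul_le_sq_add b d
      _ = ((a + c) * (b + d) / 4) ^ 2 := by ring
  exact (pow_le_pow_iff_left₀ hmin (by positivity) two_ne_zero).1 hsq

end

theorem stmt_8_general (xl xu yl yu x y z : ℝ)
    (hx : xl ≤ x ∧ x ≤ xu) (hy : yl ≤ y ∧ y ≤ yu)
    (h1 : z ≥ x * yl + xl * y - xl * yl)
    (h2 : z ≥ x * yu + xu * y - xu * yu)
    (h3 : z ≤ x * yl + xu * y - yl * xu)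
    (h4 : z ≤ x * yu + xl * y - yu * xl) :
    |z - x * y| ≤ (xu - xl) * (yu - yl) / 4 := by
  obtain ⟨hxl, hxu⟩ := hx
  obtain ⟨hyl, hyu⟩ := hy
  have ha : 0 ≤ x - xl := sub_nonneg.2 hxl
  have hb : 0 ≤ y - yl := sub_nonneg.2 hyl
  have hc : 0 ≤ xu - x := sub_nonneg.2 hxu
  have hd : 0 ≤ yu - y := sub_nonneg.2 hyu
  have hbox_eq : (xu - xl) * (yu - yl) = (x - xl + (xu - x)) * (y - yl + (yu - y)) := by ring
  have hbox_eq' : (xu - xl) * (yu - yl) = (x - xl + (xu - x)) * (yu - y + (y - yl)) := by ring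
  have hunder : x * y - z ≤ min ((x - xl) * (y - yl)) ((xu - x) * (yu - y)) :=
    le_min (by linear_combination h1) (by linear_combination h2)
  have hover : z - x * y ≤ min ((x - xl) * (yu - y)) ((xu - x) * (y - yl)) :=
    le_min (by linear_combination h4) (by linear_combination h3)
  rw [abs_le]
  constructor
  · rw [neg_le, neg_sub, hbox_eq]
    exact hunder.trans (min_mul_mul_le_add_mul_add_div_four ha hb hc hd)
  · rw [hbox_eq']
    exact hover.trans (min_mul_mul_le_add_mul_add_div_four ha hd hc hb)

/-- McCormick relaxation gap bound: if `x ∈ [x̲, x̄]`, `y ∈ [y̲, ȳ]` and `z`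
satisfies the four McCormick inequalities, then
`|z − x·y| ≤ (x̄ − x̲)·(ȳ − y̲)/4`. -/
theorem stmt_8 (xl xu yl yu x y z : ℝ)
    (hbox : xl ≤ xu ∧ yl ≤ yu)
    (hx : xl ≤ x ∧ x ≤ xu) (hy : yl ≤ y ∧ y ≤ yu)
    (h1 : z ≥ x * yl + xl * y - xl * yl)
    (h2 : z ≥ x * yu + xu * y - xu * yu)
    (h3 : z ≤ x * yl + xu * y - yl * xu)
    (h4 : z ≤ x * yu + xl * y - yu * xl) :
    |z - x * y| ≤ (xu - xl) * (yu - yl) / 4 :=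
  stmt_8_general xl xu yl yu x y z hx hy h1 h2 h3 h4
end
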